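/- Polynomial equivalid formula for propositional logic: a contextual propositional formula φ is valid if and only if the ordinary propositional formula φ_e := (⋀_{c[ψ₁],c[ψ₂]∈cs(φ)} (dec(ψ₁) → dec(ψ₂)) → (p_{c[ψ₁]} → p_{c[ψ₂]})) → dec(φ) is a tautology, where the conjunction ranges over all pairs of context subformulas of φ with the same context variable c. -/

import Mathlib

inductive PForm (α : Type) : Type
  | tru : PForm α
  | fls : PForm α
  | atom : α → PForm α
  | natom : α → PForm α
  | and : PForm α → PForm α → PForm α
  | or : PForm α → PForm α → PForm α

variable {α : Type}

def PForm.eval (v : α → Bool) : PForm α → Bool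
  | .tru => true
  | .fls => false
  | .atom a => v a
  | .natom a => !(v a)
  | .and φ ψ => φ.eval v && ψ.eval v
  | .or φ ψ => φ.eval v || ψ.eval v

inductive Ctx (α : Type) : Type
  | tru : Ctx α
  | fls : Ctx α
  | hole : Ctx α
  | atom : α → Ctx α
  | natom : α → Ctx α
  | and : Ctx α → Ctx α → Ctx α
  | or : Ctx α → Ctx α → Ctx α

/-- Fill every hole of a context with a formula. -/
def Ctx.fill : Ctx α → PForm α → PForm α
  | .tru, _ => .tru
  | .fls, _ => .fls
  | .hole, ψ => ψ
  | .atom a, _ => .atom a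
  | .natom a, _ => .natom a
  | .and C D, ψ => .and (C.fill ψ) (D.fill ψ)
  | .or C D, ψ => .or (C.fill ψ) (D.fill ψ)

/-- Negation (De Morgan dual) of an NNF formula. -/
def PForm.negNNF : PForm α → PForm α
  | .tru => .fls
  | .fls => .tru
  | .atom a => .natom a
  | .natom a => .atom a
  | .and φ ψ => .or φ.negNNF ψ.negNNF
  | .or φ ψ => .and φ.negNNF ψ.negNNF

/-- View an ordinary formula as a (hole-free) context. -/
def PForm.toCtx : PForm α → Ctx α
  | .tru => .tru
  | .fls => .fls
  | .atom a => .atom a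
  | .natom a => .natom a
  | .and φ ψ => .and φ.toCtx ψ.toCtx
  | .or φ ψ => .or φ.toCtx ψ.toCtx

def bigAndC : List (Ctx α) → Ctx α := List.foldr Ctx.and Ctx.tru

/-- Contextual propositional formulas over context variables `γ` and atoms `α`. -/
inductive CForm (γ α : Type) : Type
  | tru : CForm γ α
  | fls : CForm γ α
  | atom : α → CForm γ α
  | natom : α → CForm γ α
  | and : CForm γ α → CForm γ α → CForm γ α
  | or : CForm γ α → CForm γ α → CForm γ α
  | capp : γ → CForm γ α → CForm γ α

variable {γ : Type}

/-- Instantiate the context variables (bottom-up). -/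
def CForm.inst (σ : γ → Ctx α) : CForm γ α → PForm α
  | .tru => .tru
  | .fls => .fls
  | .atom a => .atom a
  | .natom a => .natom a
  | .and φ ψ => .and (φ.inst σ) (ψ.inst σ)
  | .or φ ψ => .or (φ.inst σ) (ψ.inst σ)
  | .capp c φ => (σ c).fill (φ.inst σ)

/-- The context subformulas `c[ψ]` of a contextual formula, as pairs `(c, ψ)`. -/
def CForm.csubs : CForm γ α → List (γ × CForm γ α)
  | .and φ ψ => φ.csubs ++ ψ.csubs
  | .or φ ψ => φ.csubs ++ ψ.csubs
  | .capp c φ => (c, φ) :: φ.csubs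
  | _ => []

/-- Decontextualization: replace maximal context subformulas by fresh atoms. -/
def CForm.dec : CForm γ α → PForm (α ⊕ γ × CForm γ α)
  | .tru => .tru
  | .fls => .fls
  | .atom a => .atom (Sum.inl a)
  | .natom a => .natom (Sum.inl a)
  | .and φ ψ => .and φ.dec ψ.dec
  | .or φ ψ => .or φ.dec ψ.dec
  | .capp c φ => .atom (Sum.inr (c, φ))

def CForm.mapAtoms (f : α → δ) : CForm γ α → CForm γ δ
  | .tru => .tru
  | .fls => .fls
  | .atom a => .atom (f a)
  | .natom a => .natom (f a)
  | .and φ ψ => .and (φ.mapAtoms f) (ψ.mapAtoms f)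
  | .or φ ψ => .or (φ.mapAtoms f) (ψ.mapAtoms f)
  | .capp c φ => .capp c (φ.mapAtoms f)

/-- Implication of NNF formulas: `a → b := ¬a ∨ b`. -/
def impF (a b : PForm α) : PForm α := .or a.negNNF b

def bigAnd : List (PForm α) → PForm α := List.foldr PForm.and PForm.tru

/-- The equivalid formula `φ_e`. -/
def phiE [DecidableEq γ] (φ : CForm γ α) : PForm (α ⊕ γ × CForm γ α) :=
  impF
    (bigAnd ((φ.csubs).flatMap fun x =>
      ((φ.csubs).filter (fun y => decide (y.1 = x.1))).map fun y =>
        impF (impF x.2.dec y.2.dec) (impF (.atom (Sum.inr x)) (.atom (Sum.inr y)))))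
    φ.dec

/-! If `φ` is valid, every instantiation `σ` induces a valuation of the atoms
`p_{c[ψ]}` (the truth value of `σ(c[ψ])`) under which `dec` agrees with `σ`; since holes are
positive, `σ c` is monotone, so this valuation satisfies the premise of `φ_e`. Conversely, a
valuation `v` satisfying that premise is realised by the instantiation
`σ c := ⋁_{c[ψ] ∈ cs(φ)} ((dec ψ → □) ∧ p_{c[ψ]})`: for `c[χ] ∈ cs(φ)`, the disjunct for `χ`
shows that `p_{c[χ]}` implies `σ c [dec χ]`, and the premise of `φ_e` gives the converse. -/

def bigOrC : List (Ctx α) → Ctx α := List.foldr Ctx.or Ctx.fls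

theorem PForm.eval_negNNF (v : α → Bool) (φ : PForm α) : φ.negNNF.eval v = !φ.eval v := by
  induction φ <;> simp [PForm.negNNF, PForm.eval, *]

theorem eval_impF (v : α → Bool) (a b : PForm α) :
    (impF a b).eval v = true ↔ (a.eval v = true → b.eval v = true) := by
  simp [impF, PForm.eval, PForm.eval_negNNF, imp_iff_not_or]

theorem eval_bigAnd (v : α → Bool) (l : List (PForm α)) :
    (bigAnd l).eval v = true ↔ ∀ φ ∈ l, φ.eval v = true := by
  induction l <;> simp_all [bigAnd, PForm.eval]

theorem PForm.fill_toCtx (φ ψ : PForm α) : φ.toCtx.fill ψ = φ := by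
  induction φ <;> simp [PForm.toCtx, Ctx.fill, *]

theorem Ctx.eval_fill_mono (v : α → Bool) (C : Ctx α) {X Y : PForm α}
    (h : X.eval v = true → Y.eval v = true) :
    (C.fill X).eval v = true → (C.fill Y).eval v = true := by
  induction C with
  | hole => exact h
  | and C D ihC ihD =>
    simp only [Ctx.fill, PForm.eval, Bool.and_eq_true]
    exact And.imp ihC ihD
  | or C D ihC ihD =>
    simp only [Ctx.fill, PForm.eval, Bool.or_eq_true]
    exact Or.imp ihC ihD
  | _ => exact id

theorem eval_fill_bigOrC (v : α → Bool) (l : List (Ctx α)) (X : PForm α) :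
    ((bigOrC l).fill X).eval v = true ↔ ∃ C ∈ l, (C.fill X).eval v = true := by
  induction l <;> simp_all [bigOrC, Ctx.fill, PForm.eval]

namespace CForm

variable {δ : Type}

/-- The premise of `φ_e`: the atoms `p_{c[ψ]}` are monotone in `dec ψ` for each fixed `c`. -/
def ContextMonotone (φ : CForm γ α) (v : α ⊕ γ × CForm γ α → Bool) : Prop :=
  ∀ x ∈ φ.csubs, ∀ y ∈ φ.csubs, y.1 = x.1 →
    (x.2.dec.eval v = true → y.2.dec.eval v = true) → v (.inr x) = true → v (.inr y) = true

theorem eval_phiE [DecidableEq γ] (φ : CForm γ α) (v : α ⊕ γ × CForm γ α → Bool) :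
    (phiE φ).eval v = true ↔ (φ.ContextMonotone v → φ.dec.eval v = true) := by
  simp only [phiE, eval_impF, eval_bigAnd, List.mem_flatMap, List.mem_map, List.mem_filter,
    decide_eq_true_eq]
  refine imp_congr_left ⟨fun h x hx y hy hxy => ?_, fun h _ ⟨x, hx, y, ⟨hy, hxy⟩, hxy'⟩ => ?_⟩
  · simpa [eval_impF, PForm.eval] using h _ ⟨x, hx, y, ⟨hy, hxy⟩, rfl⟩
  · simpa [← hxy', eval_impF, PForm.eval] using h x hx y hy hxy

def instValuation (f : α → δ) (σ : γ → Ctx δ) (v : δ → Bool) : α ⊕ γ × CForm γ α → Bool :=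
  Sum.elim (v ∘ f) fun x => ((σ x.1).fill ((x.2.mapAtoms f).inst σ)).eval v

theorem eval_dec_instValuation (f : α → δ) (σ : γ → Ctx δ) (v : δ → Bool) (χ : CForm γ α) :
    χ.dec.eval (instValuation f σ v) = ((χ.mapAtoms f).inst σ).eval v := by
  induction χ <;> simp_all [dec, mapAtoms, inst, PForm.eval, instValuation]

theorem contextMonotone_instValuation (f : α → δ) (σ : γ → Ctx δ) (v : δ → Bool)
    (φ : CForm γ α) : φ.ContextMonotone (instValuation f σ v) := by
  intro x _ y _ hxy hdec
  rw [eval_dec_instValuation, eval_dec_instValuation] at hdec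
  simp only [instValuation, Sum.elim_inr, hxy]
  exact (σ x.1).eval_fill_mono v hdec

variable [DecidableEq γ]

def witnessCtx (φ : CForm γ α) (c : γ) : Ctx (α ⊕ γ × CForm γ α) :=
  bigOrC ((φ.csubs.filter fun y => y.1 = c).map fun y =>
    .and (.or y.2.dec.negNNF.toCtx .hole) (.atom (.inr y)))

theorem eval_fill_witnessCtx (φ : CForm γ α) (c : γ) (X : PForm (α ⊕ γ × CForm γ α))
    (v : α ⊕ γ × CForm γ α → Bool) :
    ((φ.witnessCtx c).fill X).eval v = true ↔
      ∃ y ∈ φ.csubs, y.1 = c ∧ (y.2.dec.eval v = true → X.eval v = true) ∧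
        v (.inr y) = true := by
  simp [witnessCtx, eval_fill_bigOrC, Ctx.fill, PForm.fill_toCtx, PForm.eval,
    PForm.eval_negNNF, imp_iff_not_or]

theorem eval_fill_witnessCtx_of_contextMonotone {φ : CForm γ α}
    {v : α ⊕ γ × CForm γ α → Bool} (hv : φ.ContextMonotone v) {x : γ × CForm γ α}
    (hx : x ∈ φ.csubs) {X : PForm (α ⊕ γ × CForm γ α)} (hX : X.eval v = x.2.dec.eval v) :
    ((φ.witnessCtx x.1).fill X).eval v = v (.inr x) := by
  rw [Bool.eq_iff_iff, eval_fill_witnessCtx, hX]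
  constructor
  · rintro ⟨y, hy, hyx, hdec, hpy⟩
    exact hv y hy x hx hyx.symm hdec hpy
  · exact fun hpx => ⟨x, hx, rfl, id, hpx⟩

theorem eval_inst_witnessCtx {φ : CForm γ α} {v : α ⊕ γ × CForm γ α → Bool}
    (hv : φ.ContextMonotone v) {χ : CForm γ α} (hχ : χ.csubs ⊆ φ.csubs) :
    ((χ.mapAtoms Sum.inl).inst φ.witnessCtx).eval v = χ.dec.eval v := by
  induction χ with
  | and a b iha ihb | or a b iha ihb =>
    simp only [csubs, List.append_subset] at hχ
    simp [mapAtoms, inst, dec, PForm.eval, iha hχ.1, ihb hχ.2]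
  | capp c ψ ih =>
    simp only [csubs, List.cons_subset] at hχ
    exact eval_fill_witnessCtx_of_contextMonotone hv hχ.1 (ih hχ.2)
  | _ => rfl

end CForm

/-- Polynomial equivalid formula: `φ` is contextually valid iff `φ_e` is a tautology. -/
theorem equivalid_formula_valid {γ α : Type} [DecidableEq γ] (φ : CForm γ α) :
    (∀ (σ : γ → Ctx (α ⊕ γ × CForm γ α)) (v : α ⊕ γ × CForm γ α → Bool),
        ((φ.mapAtoms Sum.inl).inst σ).eval v = true) ↔
    (∀ v : α ⊕ γ × CForm γ α → Bool, (phiE φ).eval v = true) := by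
  constructor
  · intro hvalid v
    rw [CForm.eval_phiE]
    intro hv
    rw [← CForm.eval_inst_witnessCtx hv (List.Subset.refl _)]
    exact hvalid _ v
  · intro htaut σ v
    rw [← CForm.eval_dec_instValuation]
    exact (CForm.eval_phiE φ _).1 (htaut _) (CForm.contextMonotone_instValuation _ σ v φ)
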